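/- Let R be a commutative ring and F ∈ R[[X,Y]] a formal group law. Then the operation a ⊕ b := F(a,b) (which is well-defined on nilpotent elements since substitution of nilpotents into a power series with no constant term terminates) makes the set of nilpotent elements of R into an abelian group with neutral element 0. -/

import Mathlib

/-!
For nilpotent `a`, `b` the truncated sum `evalF2 F a b N` no longer depends on `N` once
`a ^ N = b ^ N = 0`; this defines `a ⊕ b`. The unit law, commutativity and closure are read off the
coefficients of `F`. For associativity, evaluation at a nilpotent point `(a, b, c)` is a ring
homomorphism `R⟦X₀, X₁, X₂⟧ → R` (truncate to a polynomial, then evaluate), and it sends `F(g, h)`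
to `g(a, b, c) ⊕ h(a, b, c)`; apply it to `F(F(X₀, X₁), X₂) = F(X₀, F(X₁, X₂))`. Inverses come
from the iteration `b ↦ b - a ⊕ b`, which gains a factor `a` at each step because
`a ⊕ b - a ⊕ b' - (b - b')` is divisible by `a * (b - b')`.
-/

/-- Substitution `F(g,h)` of two power series of positive order into a two-variable
formal power series `F`. -/
noncomputable def substF2 {R : Type*} [CommRing R] {σ : Type*}
    (F : MvPowerSeries (Fin 2) R) (g h : MvPowerSeries σ R) : MvPowerSeries σ R :=
  fun d => ∑ a ∈ Finset.range ((d.sum fun _ k => k) + 1),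
    ∑ b ∈ Finset.range ((d.sum fun _ k => k) + 1),
      MvPowerSeries.coeff
          (Finsupp.single (0 : Fin 2) a + Finsupp.single (1 : Fin 2) b) F *
        MvPowerSeries.coeff d (g ^ a * h ^ b)

/-- Truncated evaluation of a two-variable power series `F` at elements `a`, `b` of the
base ring: `∑_{i,j < N} F_{i,j} a^i b^j`.  When `a^N = 0 = b^N` this is the (terminating)
substitution of the nilpotents `a`, `b` into `F`. -/
noncomputable def evalF2 {R : Type*} [CommRing R]
    (F : MvPowerSeries (Fin 2) R) (a b : R) (N : ℕ) : R :=
  ∑ i ∈ Finset.range N, ∑ j ∈ Finset.range N,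
    MvPowerSeries.coeff (Finsupp.single (0 : Fin 2) i + Finsupp.single (1 : Fin 2) j) F
      * a ^ i * b ^ j

open MvPowerSeries Finset

section EvalF2

variable {R : Type*} [CommRing R] (F : MvPowerSeries (Fin 2) R)

lemma evalF2_eq_of_le {a b : R} {N M : ℕ} (ha : a ^ N = 0) (hb : b ^ N = 0) (h : N ≤ M) :
    evalF2 F a b M = evalF2 F a b N := by
  have hsub : range N ⊆ range M := range_subset_range.2 h
  refine (sum_subset hsub fun i _ hi => sum_eq_zero fun j _ => ?_).symm.trans
    (sum_congr rfl fun i _ => (sum_subset hsub fun j _ hj => ?_).symm)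
  · rw [pow_eq_zero_of_le (not_lt.1 (mem_range.not.1 hi)) ha, mul_zero, zero_mul]
  · rw [pow_eq_zero_of_le (not_lt.1 (mem_range.not.1 hj)) hb, mul_zero]

lemma evalF2_comm
    (hsymm : ∀ a b : ℕ,
      coeff (Finsupp.single (0 : Fin 2) a + Finsupp.single (1 : Fin 2) b) F
        = coeff (Finsupp.single (0 : Fin 2) b + Finsupp.single (1 : Fin 2) a) F)
    (a b : R) (N : ℕ) : evalF2 F a b N = evalF2 F b a N := by
  rw [evalF2, evalF2, sum_comm]
  exact sum_congr rfl fun j _ => sum_congr rfl fun i _ => by rw [hsymm]; ring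

lemma evalF2_zero_right
    (hX : ∀ n : ℕ, coeff (Finsupp.single (0 : Fin 2) n) F = if n = 1 then 1 else 0)
    (a : R) {N : ℕ} (hN : 2 ≤ N) : evalF2 F a 0 N = a := by
  simp [evalF2, zero_pow_eq, hX, show 0 < N by omega, show 1 < N by omega]

lemma evalF2_zero_left
    (hY : ∀ n : ℕ, coeff (Finsupp.single (1 : Fin 2) n) F = if n = 1 then 1 else 0)
    (b : R) {N : ℕ} (hN : 2 ≤ N) : evalF2 F 0 b N = b := by
  simp [evalF2, zero_pow_eq, hY, show 0 < N by omega, show 1 < N by omega]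

lemma isNilpotent_evalF2 (hF0 : constantCoeff F = 0) {a b : R} (ha : IsNilpotent a)
    (hb : IsNilpotent b) (N : ℕ) : IsNilpotent (evalF2 F a b N) := by
  rw [← mem_nilradical] at ha hb ⊢
  refine Ideal.sum_mem _ fun i _ => Ideal.sum_mem _ fun j _ => ?_
  rcases Nat.eq_zero_or_pos i with rfl | hi
  · rcases Nat.eq_zero_or_pos j with rfl | hj
    · simp [hF0]
    · exact Ideal.mul_mem_left _ _ (Ideal.pow_mem_of_mem _ hb j hj)
  · exact Ideal.mul_mem_right _ _ (Ideal.mul_mem_left _ _ (Ideal.pow_mem_of_mem _ ha i hi))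

lemma mul_sub_dvd_evalF2_sub (a a' b b' : R) (N : ℕ) :
    (a - a') * (b - b') ∣
      evalF2 F a b N - evalF2 F a b' N - (evalF2 F a' b N - evalF2 F a' b' N) := by
  simp only [evalF2, ← sum_sub_distrib]
  refine dvd_sum fun i _ => dvd_sum fun j _ => ?_
  rw [show ∀ c : R, c * a ^ i * b ^ j - c * a ^ i * b' ^ j
      - (c * a' ^ i * b ^ j - c * a' ^ i * b' ^ j)
      = c * ((a ^ i - a' ^ i) * (b ^ j - b' ^ j)) from fun c => by ring]
  exact dvd_mul_of_dvd_right (mul_dvd_mul (sub_dvd_pow_sub_pow a a' i)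
    (sub_dvd_pow_sub_pow b b' j)) _

end EvalF2

section NilAdd

variable {R : Type*} [CommRing R] (F : MvPowerSeries (Fin 2) R)

lemma pow_eq_zero_of_nilpotencyClass_le {x : R} (hx : IsNilpotent x) {n : ℕ}
    (h : nilpotencyClass x ≤ n) : x ^ n = 0 :=
  pow_eq_zero_of_le h (pow_nilpotencyClass hx)

-- `nilpotencyClass x = 0` when `x` is not nilpotent, so the value is junk off the nilpotents.
noncomputable def nilAdd (a b : R) : R :=
  evalF2 F a b (max (nilpotencyClass a) (nilpotencyClass b))

lemma nilAdd_eq_evalF2 {a b : R} {N : ℕ} (ha : a ^ N = 0) (hb : b ^ N = 0) :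
    nilAdd F a b = evalF2 F a b N := by
  have hK : a ^ max (nilpotencyClass a) (nilpotencyClass b) = 0 ∧
      b ^ max (nilpotencyClass a) (nilpotencyClass b) = 0 :=
    ⟨pow_eq_zero_of_nilpotencyClass_le ⟨N, ha⟩ (le_max_left _ _),
      pow_eq_zero_of_nilpotencyClass_le ⟨N, hb⟩ (le_max_right _ _)⟩
  rw [nilAdd, ← evalF2_eq_of_le F hK.1 hK.2 (le_max_right N _),
    evalF2_eq_of_le F ha hb (le_max_left N _)]

lemma nilAdd_comm
    (hsymm : ∀ a b : ℕ,
      coeff (Finsupp.single (0 : Fin 2) a + Finsupp.single (1 : Fin 2) b) F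
        = coeff (Finsupp.single (0 : Fin 2) b + Finsupp.single (1 : Fin 2) a) F)
    (a b : R) : nilAdd F a b = nilAdd F b a := by
  rw [nilAdd, nilAdd, max_comm, evalF2_comm F hsymm]

lemma nilAdd_zero
    (hX : ∀ n : ℕ, coeff (Finsupp.single (0 : Fin 2) n) F = if n = 1 then 1 else 0)
    {a : R} (ha : IsNilpotent a) : nilAdd F a 0 = a := by
  rw [nilAdd_eq_evalF2 F (pow_eq_zero_of_nilpotencyClass_le ha (Nat.le_add_right _ 2))
    (zero_pow (by omega)), evalF2_zero_right F hX a (by omega)]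

lemma zero_nilAdd
    (hY : ∀ n : ℕ, coeff (Finsupp.single (1 : Fin 2) n) F = if n = 1 then 1 else 0)
    {b : R} (hb : IsNilpotent b) : nilAdd F 0 b = b := by
  rw [nilAdd_eq_evalF2 F (zero_pow (by omega))
    (pow_eq_zero_of_nilpotencyClass_le hb (Nat.le_add_right _ 2)),
    evalF2_zero_left F hY b (by omega)]

lemma isNilpotent_nilAdd (hF0 : constantCoeff F = 0) {a b : R} (ha : IsNilpotent a)
    (hb : IsNilpotent b) : IsNilpotent (nilAdd F a b) :=
  isNilpotent_evalF2 F hF0 ha hb _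

lemma mul_sub_dvd_nilAdd_sub_nilAdd
    (hY : ∀ n : ℕ, coeff (Finsupp.single (1 : Fin 2) n) F = if n = 1 then 1 else 0)
    {a b b' : R} (ha : IsNilpotent a) (hb : IsNilpotent b) (hb' : IsNilpotent b') :
    a * (b - b') ∣ nilAdd F a b - nilAdd F a b' - (b - b') := by
  set N := nilpotencyClass a + nilpotencyClass b + nilpotencyClass b' + 2
  have key := mul_sub_dvd_evalF2_sub F a 0 b b' N
  rw [sub_zero, evalF2_zero_left F hY b (by omega), evalF2_zero_left F hY b' (by omega)] at key
  have hN {x : R} (hx : IsNilpotent x) (h : nilpotencyClass x ≤ N) : x ^ N = 0 :=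
    pow_eq_zero_of_nilpotencyClass_le hx h
  rwa [nilAdd_eq_evalF2 F (hN ha (by omega)) (hN hb (by omega)),
    nilAdd_eq_evalF2 F (hN ha (by omega)) (hN hb' (by omega))]

lemma exists_pow_dvd_nilAdd (hF0 : constantCoeff F = 0)
    (hX : ∀ n : ℕ, coeff (Finsupp.single (0 : Fin 2) n) F = if n = 1 then 1 else 0)
    (hY : ∀ n : ℕ, coeff (Finsupp.single (1 : Fin 2) n) F = if n = 1 then 1 else 0)
    {a : R} (ha : IsNilpotent a) (k : ℕ) :
    ∃ b, IsNilpotent b ∧ a ^ (k + 1) ∣ nilAdd F a b := by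
  induction k with
  | zero => exact ⟨0, IsNilpotent.zero, by rw [nilAdd_zero F hX ha, pow_one]⟩
  | succ k ih =>
    obtain ⟨b, hb, hdvd⟩ := ih
    have hab := isNilpotent_nilAdd F hF0 ha hb
    have hb' : IsNilpotent (b - nilAdd F a b) := (Commute.all _ _).isNilpotent_sub hb hab
    refine ⟨b - nilAdd F a b, hb', ?_⟩
    have key := mul_sub_dvd_nilAdd_sub_nilAdd F hY ha hb' hb
    rw [show b - nilAdd F a b - b = -nilAdd F a b by ring, mul_neg, neg_dvd,
      sub_neg_eq_add, sub_add_cancel] at key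
    exact (pow_succ' a (k + 1) ▸ mul_dvd_mul_left a hdvd).trans key

lemma exists_nilAdd_eq_zero (hF0 : constantCoeff F = 0)
    (hX : ∀ n : ℕ, coeff (Finsupp.single (0 : Fin 2) n) F = if n = 1 then 1 else 0)
    (hY : ∀ n : ℕ, coeff (Finsupp.single (1 : Fin 2) n) F = if n = 1 then 1 else 0)
    {a : R} (ha : IsNilpotent a) : ∃ b, IsNilpotent b ∧ nilAdd F a b = 0 := by
  obtain ⟨b, hb, hdvd⟩ := exists_pow_dvd_nilAdd F hF0 hX hY ha (nilpotencyClass a)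
  rw [pow_eq_zero_of_nilpotencyClass_le ha (Nat.le_succ _), zero_dvd_iff] at hdvd
  exact ⟨b, hb, hdvd⟩

end NilAdd

namespace MvPowerSeries

variable {σ R : Type*} [CommRing R]

lemma coeff_pow_mul_eq_zero_of_degree_lt {g : MvPowerSeries σ R} (hg : constantCoeff g = 0)
    (h : MvPowerSeries σ R) {n : ℕ} {d : σ →₀ ℕ} (hd : d.degree < n) :
    coeff d (g ^ n * h) = 0 :=
  coeff_of_lt_order <| (Nat.cast_lt.2 hd).trans_le <|
    (le_order_pow_of_constantCoeff_eq_zero n hg).trans <| le_self_add.trans le_order_mul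

variable [DecidableEq σ] {v : σ → R} {D : σ →₀ ℕ}

lemma eval_trunc'_of_pow_eq_zero (hv : ∀ i, v i ^ (D i + 1) = 0) (p : MvPolynomial σ R) :
    MvPolynomial.eval v (trunc' R D p) = MvPolynomial.eval v p := by
  induction p using MvPolynomial.induction_on' with
  | monomial d r =>
    have htrunc : trunc' R D (MvPolynomial.monomial d r : MvPowerSeries σ R)
        = if d ≤ D then MvPolynomial.monomial d r else 0 := by
      ext m
      simp only [coeff_trunc', MvPolynomial.coeff_coe, MvPolynomial.coeff_monomial]
      split_ifs <;> aesop
    rw [htrunc]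
    split_ifs with hd
    · rfl
    · obtain ⟨i, hi⟩ := not_forall.1 hd
      have hvi : v i ^ d i = 0 := pow_eq_zero_of_le (by omega) (hv i)
      rw [map_zero, MvPolynomial.eval_monomial, Finsupp.prod,
        prod_eq_zero (f := fun j => v j ^ d j) (Finsupp.mem_support_iff.2 (by omega)) hvi,
        mul_zero]
  | add p q hp hq => simp only [MvPolynomial.coe_add, map_add, hp, hq]

variable (v D) in
noncomputable def evalNilpotent (hv : ∀ i, v i ^ (D i + 1) = 0) : MvPowerSeries σ R →+* R where
  toFun f := MvPolynomial.eval v (trunc' R D f)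
  map_one' := by simp
  map_zero' := by simp
  map_add' f g := by simp
  map_mul' f g := by
    rw [← map_mul, ← eval_trunc'_of_pow_eq_zero hv (trunc' R D f * trunc' R D g)]
    congr 1
    ext m
    rw [coeff_trunc', coeff_trunc']
    split_ifs with hm
    · rw [MvPolynomial.coeff_coe, coeff_trunc'_mul_trunc'_eq_coeff_mul D f g hm]
    · rfl

variable (hv : ∀ i, v i ^ (D i + 1) = 0)

lemma evalNilpotent_apply (f : MvPowerSeries σ R) :
    evalNilpotent v D hv f = MvPolynomial.eval v (trunc' R D f) := rfl

lemma evalNilpotent_coe (p : MvPolynomial σ R) : evalNilpotent v D hv p = MvPolynomial.eval v p :=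
  eval_trunc'_of_pow_eq_zero hv p

lemma evalNilpotent_X (i : σ) : evalNilpotent v D hv (X i) = v i := by
  rw [← MvPolynomial.coe_X, evalNilpotent_coe, MvPolynomial.eval_X]

lemma evalNilpotent_C (r : R) : evalNilpotent v D hv (C r) = r := by
  rw [← MvPolynomial.coe_C, evalNilpotent_coe, MvPolynomial.eval_C]

lemma evalNilpotent_eq_of_coeff_eq {f g : MvPowerSeries σ R} (h : ∀ d ≤ D, coeff d f = coeff d g) :
    evalNilpotent v D hv f = evalNilpotent v D hv g := by
  rw [evalNilpotent_apply, evalNilpotent_apply]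
  congr 1
  ext m
  rw [coeff_trunc', coeff_trunc']
  split_ifs with hm
  exacts [h m hm, rfl]

lemma evalNilpotent_pow_eq_zero {g : MvPowerSeries σ R} (hg : constantCoeff g = 0) {L : ℕ}
    (hL : D.degree < L) : evalNilpotent v D hv g ^ L = 0 := by
  rw [← map_pow, ← map_zero (evalNilpotent v D hv)]
  refine evalNilpotent_eq_of_coeff_eq hv fun d hd => ?_
  rw [← mul_one (g ^ L), map_zero, coeff_pow_mul_eq_zero_of_degree_lt hg 1
    ((Finsupp.degree_mono hd).trans_lt hL)]

end MvPowerSeries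

section Substitution

variable {R : Type*} [CommRing R] (F : MvPowerSeries (Fin 2) R) {σ : Type*}

lemma coeff_substF2 {g h : MvPowerSeries σ R} (hg : constantCoeff g = 0)
    (hh : constantCoeff h = 0) {d : σ →₀ ℕ} {L : ℕ} (hd : d.degree < L) :
    coeff d (substF2 F g h) = coeff d (∑ a ∈ range L, ∑ b ∈ range L,
      C (coeff (Finsupp.single (0 : Fin 2) a + Finsupp.single (1 : Fin 2) b) F)
        * g ^ a * h ^ b) := by
  have hsub : range (d.degree + 1) ⊆ range L := range_subset_range.2 hd
  rw [show coeff d (substF2 F g h) = ∑ a ∈ range (d.degree + 1), ∑ b ∈ range (d.degree + 1),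
    coeff (Finsupp.single (0 : Fin 2) a + Finsupp.single (1 : Fin 2) b) F *
      coeff d (g ^ a * h ^ b) from rfl]
  simp only [map_sum, mul_assoc, coeff_C_mul]
  refine (sum_subset hsub fun a _ ha => sum_eq_zero fun b _ => ?_).trans
    (sum_congr rfl fun a _ => sum_subset hsub fun b _ hb => ?_)
  · rw [coeff_pow_mul_eq_zero_of_degree_lt hg _ (not_le.1 (mem_range_succ_iff.not.1 ha)),
      mul_zero]
  · rw [mul_comm (g ^ a), coeff_pow_mul_eq_zero_of_degree_lt hh _
      (not_le.1 (mem_range_succ_iff.not.1 hb)), mul_zero]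

lemma constantCoeff_substF2 (hF0 : constantCoeff F = 0) (g h : MvPowerSeries σ R) :
    constantCoeff (substF2 F g h) = 0 := by
  rw [← coeff_zero_eq_constantCoeff_apply, coeff_apply]
  simp [substF2, hF0]

variable [DecidableEq σ] {v : σ → R} {D : σ →₀ ℕ} (hv : ∀ i, v i ^ (D i + 1) = 0)
  {g h : MvPowerSeries σ R}

lemma evalNilpotent_substF2_eq_evalF2 (hg : constantCoeff g = 0) (hh : constantCoeff h = 0)
    {L : ℕ} (hL : D.degree < L) :
    evalNilpotent v D hv (substF2 F g h)
      = evalF2 F (evalNilpotent v D hv g) (evalNilpotent v D hv h) L := by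
  rw [evalNilpotent_eq_of_coeff_eq hv fun d hd =>
    coeff_substF2 F hg hh ((Finsupp.degree_mono hd).trans_lt hL)]
  simp only [evalF2, map_sum, map_mul, map_pow, evalNilpotent_C]

lemma evalNilpotent_substF2 (hg : constantCoeff g = 0) (hh : constantCoeff h = 0) :
    evalNilpotent v D hv (substF2 F g h)
      = nilAdd F (evalNilpotent v D hv g) (evalNilpotent v D hv h) := by
  rw [evalNilpotent_substF2_eq_evalF2 F hv hg hh (Nat.lt_succ_self _),
    nilAdd_eq_evalF2 F (evalNilpotent_pow_eq_zero hv hg (Nat.lt_succ_self _))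
      (evalNilpotent_pow_eq_zero hv hh (Nat.lt_succ_self _))]

end Substitution

lemma nilAdd_assoc {R : Type*} [CommRing R] (F : MvPowerSeries (Fin 2) R)
    (hF0 : constantCoeff F = 0)
    (hassoc : substF2 F (substF2 F (X 0) (X 1)) (X 2)
      = substF2 F (X 0) (substF2 F (X 1) (X (2 : Fin 3))))
    {a b c : R} (ha : IsNilpotent a) (hb : IsNilpotent b) (hc : IsNilpotent c) :
    nilAdd F (nilAdd F a b) c = nilAdd F a (nilAdd F b c) := by
  set N := nilpotencyClass a + nilpotencyClass b + nilpotencyClass c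
  have hv : ∀ i, ![a, b, c] i ^ (Finsupp.equivFunOnFinite.symm (fun _ => N) i + 1) = 0 := by
    intro i
    fin_cases i <;>
      exact pow_eq_zero_of_nilpotencyClass_le ‹_› (by simp [N]; omega)
  set e := evalNilpotent ![a, b, c] _ hv
  have hX (i : Fin 3) : constantCoeff (X i : MvPowerSeries (Fin 3) R) = 0 := constantCoeff_X i
  calc nilAdd F (nilAdd F a b) c = e (substF2 F (substF2 F (X 0) (X 1)) (X 2)) := by
        rw [evalNilpotent_substF2 F hv (constantCoeff_substF2 F hF0 _ _) (hX 2),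
          evalNilpotent_substF2 F hv (hX 0) (hX 1)]
        simp [evalNilpotent_X]
    _ = e (substF2 F (X 0) (substF2 F (X 1) (X 2))) := by rw [hassoc]
    _ = nilAdd F a (nilAdd F b c) := by
        rw [evalNilpotent_substF2 F hv (hX 0) (constantCoeff_substF2 F hF0 _ _),
          evalNilpotent_substF2 F hv (hX 1) (hX 2)]
        simp [evalNilpotent_X]

/-- for a (unital, commutative, associative) formal group law `F`, the
operation `a ⊕ b := F(a,b)` is well defined on nilpotent elements (independent of the
truncation used to evaluate it) and turns the set of nilpotent elements of `R` into an
abelian group with neutral element `0`. -/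
theorem stmt2 {R : Type*} [CommRing R] (F : MvPowerSeries (Fin 2) R)
    (hX : ∀ n : ℕ, coeff (Finsupp.single (0 : Fin 2) n) F = if n = 1 then 1 else 0)
    (hY : ∀ n : ℕ, coeff (Finsupp.single (1 : Fin 2) n) F = if n = 1 then 1 else 0)
    (hsymm : ∀ a b : ℕ,
      coeff (Finsupp.single (0 : Fin 2) a + Finsupp.single (1 : Fin 2) b) F
        = coeff (Finsupp.single (0 : Fin 2) b + Finsupp.single (1 : Fin 2) a) F)
    (hassoc : substF2 F (substF2 F (X 0) (X 1)) (X 2)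
      = substF2 F (X 0) (substF2 F (X 1) (X (2 : Fin 3)))) :
    ∃ op : R → R → R,
      -- well-definedness: `op` is computed by any valid truncation
      (∀ a b : R, ∀ N : ℕ, a ^ N = 0 → b ^ N = 0 → op a b = evalF2 F a b N) ∧
      -- closure
      (∀ a b : R, IsNilpotent a → IsNilpotent b → IsNilpotent (op a b)) ∧
      -- neutral element 0
      (∀ a : R, IsNilpotent a → op a 0 = a ∧ op 0 a = a) ∧
      -- commutativity
      (∀ a b : R, IsNilpotent a → IsNilpotent b → op a b = op b a) ∧
      -- associativity
      (∀ a b c : R, IsNilpotent a → IsNilpotent b → IsNilpotent c →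
        op (op a b) c = op a (op b c)) ∧
      -- inverses
      (∀ a : R, IsNilpotent a → ∃ b : R, IsNilpotent b ∧ op a b = 0) := by
  have hF0 : constantCoeff F = 0 := by
    simpa using hX 0
  exact ⟨nilAdd F, fun _ _ _ => nilAdd_eq_evalF2 F, fun _ _ => isNilpotent_nilAdd F hF0,
    fun _ ha => ⟨nilAdd_zero F hX ha, zero_nilAdd F hY ha⟩, fun a b _ _ => nilAdd_comm F hsymm a b,
    fun _ _ _ => nilAdd_assoc F hF0 hassoc, fun _ => exists_nilAdd_eq_zero F hF0 hX hY⟩
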